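/- For a decreasing continuous function θ : ℝ → [0,1] and levels 0 < β < ω < 1, the set {t ∈ ℝ : β < θ(t) ≤ ω} is an interval whose length equals (t_−(β) − t_+(ω))⁺, where t_−(β) = sup{t : θ(t) > β} and t_+(ω) = inf{t : θ(t) ≤ ω}; hence ∫_ℝ 1_{(β,ω]}(θ(t)) dt = (t_−(β) − t_+(ω))⁺ provided θ tends to 1 at −∞ and 0 at +∞ and θ is strictly decreasing where it takes values in (β,ω]. -/

import Mathlib

open MeasureTheory Set Filter
open scoped Topology

/-!
For antitone `θ`, the superlevel set `{t | β < θ t}` is a down-set with supremum `t₋(β)` and the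
sublevel set `{t | θ t ≤ ω}` an up-set with infimum `t₊(ω)`. Their intersection
`θ ⁻¹' (β, ω]` is therefore squeezed between `(t₊(ω), t₋(β))` and `[t₊(ω), t₋(β)]`, so its
Lebesgue measure is `(t₋(β) - t₊(ω))⁺`. The limits of `θ` at `∓∞` make both sets nonempty
and bounded on the relevant side.
-/

theorem Real.volume_eq_ofReal_of_Ioo_subset_of_subset_Icc {s : Set ℝ} {a b : ℝ}
    (hIoo : Ioo a b ⊆ s) (hIcc : s ⊆ Icc a b) : volume s = ENNReal.ofReal (b - a) :=
  le_antisymm (Real.volume_Icc ▸ measure_mono hIcc) (Real.volume_Ioo ▸ measure_mono hIoo)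

namespace Antitone

variable {f : ℝ → ℝ}

theorem bddAbove_setOf_lt (hf : Antitone f) {β t₀ : ℝ} (ht₀ : f t₀ ≤ β) :
    BddAbove {t | β < f t} :=
  ⟨t₀, fun _ ht => le_of_not_gt fun h => (ht.trans_le (hf h.le)).not_ge ht₀⟩

theorem bddBelow_setOf_le (hf : Antitone f) {ω t₀ : ℝ} (ht₀ : ω < f t₀) :
    BddBelow {t | f t ≤ ω} :=
  ⟨t₀, fun _ ht => le_of_not_gt fun h => (ht₀.trans_le (hf h.le)).not_ge ht⟩

theorem preimage_Ioc_subset_Icc {β ω : ℝ} (hA : BddAbove {t | β < f t})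
    (hB : BddBelow {t | f t ≤ ω}) :
    f ⁻¹' Ioc β ω ⊆ Icc (sInf {t | f t ≤ ω}) (sSup {t | β < f t}) :=
  fun _ ht => ⟨csInf_le hB ht.2, le_csSup hA ht.1⟩

theorem Ioo_subset_preimage_Ioc (hf : Antitone f) {β ω : ℝ} (hA : {t | β < f t}.Nonempty)
    (hB : {t | f t ≤ ω}.Nonempty) :
    Ioo (sInf {t | f t ≤ ω}) (sSup {t | β < f t}) ⊆ f ⁻¹' Ioc β ω := by
  rintro t ⟨hat, htb⟩
  obtain ⟨s, hβs, hts⟩ := exists_lt_of_lt_csSup hA htb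
  obtain ⟨r, hrω, hrt⟩ := exists_lt_of_csInf_lt hB hat
  exact ⟨hβs.trans_le (hf hts.le), (hf hrt.le).trans hrω⟩

theorem volume_preimage_Ioc (hf : Antitone f) {β ω : ℝ}
    (hA : {t | β < f t}.Nonempty) (hA' : BddAbove {t | β < f t})
    (hB : {t | f t ≤ ω}.Nonempty) (hB' : BddBelow {t | f t ≤ ω}) :
    volume (f ⁻¹' Ioc β ω) = ENNReal.ofReal (sSup {t | β < f t} - sInf {t | f t ≤ ω}) :=
  Real.volume_eq_ofReal_of_Ioo_subset_of_subset_Icc (hf.Ioo_subset_preimage_Ioc hA hB)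
    (preimage_Ioc_subset_Icc hA' hB')

end Antitone

theorem occupation_time_formula_general (θ : ℝ → ℝ)
    (hθanti : Antitone θ)
    (hθbot : Tendsto θ atBot (𝓝 1)) (hθtop : Tendsto θ atTop (𝓝 0))
    (β ω : ℝ) (hβ : 0 < β) (hβω : β < ω) (hω : ω < 1) :
    {t : ℝ | θ t ∈ Set.Ioc β ω}.OrdConnected ∧
    ∫ t : ℝ, (if θ t ∈ Set.Ioc β ω then (1:ℝ) else 0)
      = max (sSup {t : ℝ | β < θ t} - sInf {t : ℝ | θ t ≤ ω}) 0 := by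
  obtain ⟨t₁, ht₁⟩ := (hθbot.eventually (eventually_gt_nhds hω)).exists
  obtain ⟨t₂, ht₂⟩ := (hθtop.eventually (eventually_lt_nhds hβ)).exists
  have hvol := hθanti.volume_preimage_Ioc (β := β) ⟨t₁, hβω.trans ht₁⟩
    (hθanti.bddAbove_setOf_lt ht₂.le) ⟨t₂, ht₂.le.trans hβω.le⟩ (hθanti.bddBelow_setOf_le ht₁)
  refine ⟨ordConnected_Ioc.preimage_anti hθanti, ?_⟩
  rw [← ENNReal.toReal_ofReal', ← hvol, ← measureReal_def, ← integral_indicator_one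
    (hθanti.measurable measurableSet_Ioc)]
  congr 1 with t
  simp [indicator]

/-- For a decreasing continuous `θ : ℝ → [0,1]` with limits `1` at `-∞` and
`0` at `+∞`, strictly decreasing where it takes values in `(β,ω]`, and levels
`0 < β < ω < 1`: the set `{t : β < θ t ≤ ω}` is an interval (order-connected)
and `∫_ℝ 1_{(β,ω]}(θ t) dt = (t₋(β) - t₊(ω))⁺`, where
`t₋(β) = sup {t : β < θ t}` and `t₊(ω) = inf {t : θ t ≤ ω}`. -/
theorem occupation_time_formula (θ : ℝ → ℝ)
    (hθcont : Continuous θ) (hθanti : Antitone θ)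
    (hθrange : ∀ t, θ t ∈ Set.Icc (0:ℝ) 1)
    (hθbot : Tendsto θ atBot (𝓝 1)) (hθtop : Tendsto θ atTop (𝓝 0))
    (β ω : ℝ) (hβ : 0 < β) (hβω : β < ω) (hω : ω < 1)
    (hstrict : ∀ s t : ℝ, s < t → θ s ∈ Set.Ioc β ω → θ t ∈ Set.Ioc β ω →
      θ t < θ s) :
    {t : ℝ | θ t ∈ Set.Ioc β ω}.OrdConnected ∧
    ∫ t : ℝ, (if θ t ∈ Set.Ioc β ω then (1:ℝ) else 0)
      = max (sSup {t : ℝ | β < θ t} - sInf {t : ℝ | θ t ≤ ω}) 0 :=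
  occupation_time_formula_general θ hθanti hθbot hθtop β ω hβ hβω hω
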